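/- Let X be a nonnegative absolutely continuous random variable with density f and let α > 1, with 0 < ∫_0^∞ f(x)^α dx < ∞ and 0 < ∫_0^∞ f(x)^{(α+1)/2} dx < ∞. Then: (i) if β ≥ 1, R^α_β(X) ≤ (1/2)·R^{(α+1)/2}_{2β−1}(X); (ii) if 0 < β < 1, R^α_β(X) ≥ (1/2)·R^{(α+1)/2}_{2β−1}(X). Explicitly, (1/(1−α))·(∫_0^∞ f^α)^{β−1} ≤ (respectively ≥) (1/(1−α))·(∫_0^∞ f^{(α+1)/2})^{2(β−1)}. -/

import Mathlib

/-!
Writing `f ^ ((α + 1) / 2) = f ^ (α / 2) * f ^ (1 / 2)`, Cauchy–Schwarz and `∫ f = 1` give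
`(∫ f ^ ((α + 1) / 2)) ^ 2 ≤ ∫ f ^ α`. Raising this to the power `β - 1` preserves the
inequality for `β ≥ 1` and reverses it for `β < 1`, and multiplying by `1 / (1 - α) < 0`
reverses it once more.
-/

open MeasureTheory Set

section

variable {X : Type*} [MeasurableSpace X] {μ : Measure X}

theorem sq_integral_mul_le_integral_sq_mul_integral_sq {g h : X → ℝ}
    (hg : MemLp g 2 μ) (hh : MemLp h 2 μ) :
    (∫ x, g x * h x ∂μ) ^ 2 ≤ (∫ x, g x ^ 2 ∂μ) * ∫ x, h x ^ 2 ∂μ := by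
  have two : ENNReal.ofReal 2 = 2 := by norm_num
  have holder := integral_mul_norm_le_Lp_mul_Lq Real.HolderConjugate.two_two
    (two ▸ hg) (two ▸ hh)
  simp only [Real.norm_eq_abs, Real.rpow_two, sq_abs, one_div] at holder
  have habs : |∫ x, g x * h x ∂μ| ≤ √(∫ x, g x ^ 2 ∂μ) * √(∫ x, h x ^ 2 ∂μ) := by
    calc |∫ x, g x * h x ∂μ| ≤ ∫ x, |g x| * |h x| ∂μ := by
          simpa only [abs_mul] using abs_integral_le_integral_abs (f := fun x => g x * h x)
      _ ≤ _ := by simpa only [Real.sqrt_eq_rpow, one_div] using holder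
  calc (∫ x, g x * h x ∂μ) ^ 2 = |∫ x, g x * h x ∂μ| ^ 2 := (sq_abs _).symm
    _ ≤ (√(∫ x, g x ^ 2 ∂μ) * √(∫ x, h x ^ 2 ∂μ)) ^ 2 := by gcongr
    _ = (∫ x, g x ^ 2 ∂μ) * ∫ x, h x ^ 2 ∂μ := by
      rw [mul_pow, Real.sq_sqrt (integral_nonneg fun x => sq_nonneg _),
        Real.sq_sqrt (integral_nonneg fun x => sq_nonneg _)]

theorem Real.rpow_div_two_sq {x : ℝ} (hx : 0 ≤ x) (p : ℝ) : (x ^ (p / 2)) ^ 2 = x ^ p := by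
  rw [← Real.rpow_mul_natCast hx]
  norm_num

theorem memLp_two_rpow_div_two {f : X → ℝ} {p : ℝ} (hf : 0 ≤ᵐ[μ] f)
    (hfp : Integrable (fun x => f x ^ p) μ) : MemLp (fun x => f x ^ (p / 2)) 2 μ := by
  have hsq : (fun x => f x ^ p) =ᵐ[μ] fun x => (f x ^ (p / 2)) ^ 2 := by
    filter_upwards [hf] with x hx
    exact (Real.rpow_div_two_sq hx p).symm
  have hmeas : AEStronglyMeasurable (fun x => f x ^ (p / 2)) μ := by
    refine ((Real.continuous_rpow_const (by norm_num : (0:ℝ) ≤ 1 / 2)).comp_aestronglyMeasurable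
      hfp.aestronglyMeasurable).congr ?_
    filter_upwards [hf] with x hx
    simp only [← Real.rpow_mul hx]
    ring_nf
  exact (memLp_two_iff_integrable_sq hmeas).2 (hfp.congr hsq)

theorem sq_integral_rpow_add_half_le {f : X → ℝ} {p q : ℝ} (hf : 0 ≤ᵐ[μ] f)
    (hp : 0 ≤ p) (hq : 0 ≤ q)
    (hfp : Integrable (fun x => f x ^ p) μ) (hfq : Integrable (fun x => f x ^ q) μ) :
    (∫ x, f x ^ ((p + q) / 2) ∂μ) ^ 2 ≤ (∫ x, f x ^ p ∂μ) * ∫ x, f x ^ q ∂μ := by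
  have split (r : ℝ) : (fun x => f x ^ r) =ᵐ[μ] fun x => (f x ^ (r / 2)) ^ 2 := by
    filter_upwards [hf] with x hx
    exact (Real.rpow_div_two_sq hx r).symm
  have hmul : (fun x => f x ^ ((p + q) / 2)) =ᵐ[μ] fun x => f x ^ (p / 2) * f x ^ (q / 2) := by
    filter_upwards [hf] with x hx
    rw [← Real.rpow_add_of_nonneg hx (by positivity) (by positivity)]
    ring_nf
  rw [integral_congr_ae hmul, integral_congr_ae (split p), integral_congr_ae (split q)]
  exact sq_integral_mul_le_integral_sq_mul_integral_sq (memLp_two_rpow_div_two hf hfp)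
    (memLp_two_rpow_div_two hf hfq)

end

theorem rigf_cauchy_schwarz_bound_one_lt_alpha_general (f : ℝ → ℝ) (α β : ℝ)
    (hα : 1 < α)
    (hf_nonneg : ∀ x, 0 ≤ f x)
    (hf_pdf : ∫ x in Ioi (0:ℝ), f x = 1)
    (hint1 : IntegrableOn (fun x => f x ^ α) (Ioi (0:ℝ)))
    (hpos2 : 0 < ∫ x in Ioi (0:ℝ), f x ^ ((α+1)/2)) :
    (1 ≤ β →
      (1/(1-α)) * (∫ x in Ioi (0:ℝ), f x ^ α) ^ (β-1)
        ≤ (1/(1-α)) * (∫ x in Ioi (0:ℝ), f x ^ ((α+1)/2)) ^ (2*(β-1)))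
    ∧ (0 < β → β < 1 →
      (1/(1-α)) * (∫ x in Ioi (0:ℝ), f x ^ ((α+1)/2)) ^ (2*(β-1))
        ≤ (1/(1-α)) * (∫ x in Ioi (0:ℝ), f x ^ α) ^ (β-1)) := by
  set I := ∫ x in Ioi (0:ℝ), f x ^ ((α+1)/2)
  have hf_int : IntegrableOn (fun x => f x ^ (1:ℝ)) (Ioi (0:ℝ)) := by
    simp only [Real.rpow_one]
    exact integrable_of_integral_eq_one hf_pdf
  have hCS : I ^ 2 ≤ ∫ x in Ioi (0:ℝ), f x ^ α := by
    simpa only [Real.rpow_one, hf_pdf, mul_one] using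
      sq_integral_rpow_add_half_le (ae_of_all _ hf_nonneg) (by linarith) zero_le_one hint1 hf_int
  have hc : 1 / (1 - α) ≤ 0 := one_div_nonpos.2 (by linarith)
  have hI (γ : ℝ) : I ^ (2 * γ) = (I ^ 2) ^ γ := by
    exact_mod_cast Real.rpow_natCast_mul hpos2.le 2 γ
  refine ⟨fun hβ => ?_, fun _ hβ => ?_⟩
  · rw [hI]
    exact mul_le_mul_of_nonpos_left (Real.rpow_le_rpow (sq_nonneg I) hCS (by linarith)) hc
  · rw [hI]
    exact mul_le_mul_of_nonpos_left
      (Real.rpow_le_rpow_of_nonpos (pow_pos hpos2 2) hCS (by linarith)) hc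

/-- for `α > 1`: if `β ≥ 1` then
`R^α_β(X) ≤ (1/2) R^{(α+1)/2}_{2β-1}(X)`, and if `0 < β < 1` the reverse inequality holds.
Explicitly, `(1/(1-α)) (∫ f^α)^(β-1) ≤ (≥) (1/(1-α)) (∫ f^((α+1)/2))^(2(β-1))`. -/
theorem rigf_cauchy_schwarz_bound_one_lt_alpha (f : ℝ → ℝ) (α β : ℝ)
    (hα : 1 < α)
    (hf_nonneg : ∀ x, 0 ≤ f x)
    (hf_pdf : ∫ x in Ioi (0:ℝ), f x = 1)
    (hint1 : IntegrableOn (fun x => f x ^ α) (Ioi (0:ℝ)))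
    (hpos1 : 0 < ∫ x in Ioi (0:ℝ), f x ^ α)
    (hint2 : IntegrableOn (fun x => f x ^ ((α+1)/2)) (Ioi (0:ℝ)))
    (hpos2 : 0 < ∫ x in Ioi (0:ℝ), f x ^ ((α+1)/2)) :
    (1 ≤ β →
      (1/(1-α)) * (∫ x in Ioi (0:ℝ), f x ^ α) ^ (β-1)
        ≤ (1/(1-α)) * (∫ x in Ioi (0:ℝ), f x ^ ((α+1)/2)) ^ (2*(β-1)))
    ∧ (0 < β → β < 1 →
      (1/(1-α)) * (∫ x in Ioi (0:ℝ), f x ^ ((α+1)/2)) ^ (2*(β-1))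
        ≤ (1/(1-α)) * (∫ x in Ioi (0:ℝ), f x ^ α) ^ (β-1)) :=
  rigf_cauchy_schwarz_bound_one_lt_alpha_general f α β hα hf_nonneg hf_pdf hint1 hpos2
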